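/- For all x ∈ ℂ, (1 − x²)·P′(x) = A(x)·P(x) + B(x)·U_{n−1}(x), where P′ denotes the derivative of P. -/

import Mathlib

/-!
Differentiating termwise with the classical identity `(1 - x²) U_k' = (k + 1) U_{k-1} - k x U_k`
and eliminating `U_{n-2}`, `U_{n-3}` by the three-term recurrence writes both `(1 - x²) P'` and `P`
in the basis `U_n, U_{n-1}`. The claim is then an identity of rational functions in `a, b, x`
with denominator `1 - ab`.
-/

open Polynomial

section

variable {R : Type*} [CommRing R]

theorem Polynomial.Chebyshev.one_sub_X_sq_mul_derivative_U (k : ℤ) :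
    (1 - X ^ 2) * derivative (U R k) = (k + 1 : R[X]) * U R (k - 1) - (k : R[X]) * X * U R k := by
  have h₁ := add_one_mul_T_eq_poly_in_U (R := R) k
  have h₂ := T_eq_U_sub_X_mul_U R (k + 1)
  have h₃ := U_add_one R k
  rw [add_sub_cancel_right] at h₂
  linear_combination (norm := (push_cast; ring_nf)) h₁ - (k + 1 : R[X]) * h₂ - (k + 1 : R[X]) * h₃

noncomputable def chainCharPoly (a b : R) (k : ℤ) : R[X] :=
  Chebyshev.U R k - C (a + b) * Chebyshev.U R (k - 1) + C (a * b) * Chebyshev.U R (k - 2)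

theorem chainCharPoly_eq (a b : R) (k : ℤ) :
    chainCharPoly a b k =
      C (1 - a * b) * Chebyshev.U R k + (2 * C (a * b) * X - C (a + b)) * Chebyshev.U R (k - 1) := by
  rw [chainCharPoly, Chebyshev.U_sub_two]
  simp only [map_sub, map_one]
  ring

theorem one_sub_X_sq_mul_derivative_chainCharPoly (a b : R) (k : ℤ) :
    (1 - X ^ 2) * derivative (chainCharPoly a b k) =
      (k : R[X]) * (C (a + b) - X * (1 + C (a * b))) * Chebyshev.U R k +
        ((k + 1 : R[X]) * (1 - C (a + b) * X) +
            C (a * b) * (2 * (k : R[X]) * X ^ 2 - (k : R[X]) + 1)) * Chebyshev.U R (k - 1) := by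
  have h₀ := Chebyshev.one_sub_X_sq_mul_derivative_U (R := R) k
  have h₁ := Chebyshev.one_sub_X_sq_mul_derivative_U (R := R) (k - 1)
  have h₂ := Chebyshev.one_sub_X_sq_mul_derivative_U (R := R) (k - 2)
  have w₂ := Chebyshev.U_sub_two R k
  have w₃ := Chebyshev.U_sub_two R (k - 1)
  rw [show k - 1 - 1 = k - 2 by ring, show k - 1 - 2 = k - 3 by ring] at w₃
  rw [show k - 2 - 1 = k - 3 by ring] at h₂
  simp only [chainCharPoly, derivative_add, derivative_sub, derivative_C_mul]
  linear_combination (norm := (push_cast; ring_nf)) h₀ - C (a + b) * h₁ + C (a * b) * h₂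
    + C (a * b) * ((k : R[X]) - 1) * w₃ + ((k : R[X]) * (C (a * b) * X - C (a + b))) * w₂

end

theorem stmt19 (n : ℕ) (a b : ℂ) (hab : a * b ≠ 1) :
    ∀ x : ℂ,
      (1 - x^2) *
          (Polynomial.derivative
            (Chebyshev.U ℂ (n : ℤ) - C (a + b) * Chebyshev.U ℂ ((n : ℤ) - 1)
              + C (a * b) * Chebyshev.U ℂ ((n : ℤ) - 2))).eval x =
        ((n : ℂ) * (a + b - x * (1 + a * b)) / (1 - a * b)) *
            (Chebyshev.U ℂ (n : ℤ) - C (a + b) * Chebyshev.U ℂ ((n : ℤ) - 1)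
              + C (a * b) * Chebyshev.U ℂ ((n : ℤ) - 2)).eval x
          + (2 * a * b - x * (a + b) + ((n : ℂ) + 1) * (1 - a * b)
              + (n : ℂ) * (2 * x - a - b) * (2 * x * (a * b) - a - b) / (1 - a * b)) *
            (Chebyshev.U ℂ ((n : ℤ) - 1)).eval x := by
  intro x
  have hab' : 1 - a * b ≠ 0 := sub_ne_zero.mpr hab.symm
  have hD := congrArg (eval x) (one_sub_X_sq_mul_derivative_chainCharPoly a b (n : ℤ))
  have hP := congrArg (eval x) (chainCharPoly_eq a b (n : ℤ))
  simp only [chainCharPoly] at hD hP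
  simp only [eval_mul, eval_add, eval_sub, eval_pow, eval_X, eval_C, eval_one, eval_natCast,
    eval_ofNat, Int.cast_natCast] at hD hP ⊢
  rw [hD, hP]
  field_simp
  ring
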